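/- Let V_j and V_k be finite sets with n₁ := min(|V_j|, |V_k|) ≥ 2 and n₂ := n₁(n₁−1)/2. Let λ, θ ∈ (0,1) and δ, δ', δ'' > 0. Let d, d' : V_j × V_k → ℝ≥0 and d'' : V_j × V_k × V_j × V_k → ℝ≥0 be nonnegative, define the costs c_{vw} = θ(d_{vw} − δ) + (1−θ)(d'_{vw} − δ') and c_{vwv'w'} = d''_{vwv'w'} − δ'', and let φ_c be the associated objective on feasible assignments x : V_j × V_k → {0,1}, namely φ_c(x) = ((1−λ)/n₁) Σ_{v,w} c_{vw} x_{vw} + (λ/n₂) Σ c_{vwv'w'} x_{vw} x_{v'w'}, where the second sum ranges over unordered pairs of correspondences with v ≠ v' and w ≠ w'. Let m* := min over all feasible assignments x of φ_c(x), and define the normalized correlation φ := −m* / ((1−λ)(θδ + (1−θ)δ') + λδ''). Then 0 ≤ φ ≤ 1. -/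
import Mathlib


open Finset

/-- A feasible assignment between finite sets `Vj` and `Vk`: a `{0,1}`-valued map on
`Vj × Vk` such that every row sum and every column sum is at most one. -/
def FeasibleAssignment {Vj Vk : Type*} [Fintype Vj] [Fintype Vk] (x : Vj × Vk → ℕ) : Prop :=
  (∀ p, x p = 0 ∨ x p = 1) ∧
  (∀ v : Vj, ∑ w : Vk, x (v, w) ≤ 1) ∧
  (∀ w : Vk, ∑ v : Vj, x (v, w) ≤ 1)

/-- The objective `φ_c` of the partial quadratic assignment problem:
`((1−λ)/n₁) Σ_{v,w} c_{vw} x_{vw} + (λ/n₂) Σ_{{(v,w),(v′,w′)} ∈ P} c_{vwv′w′} x_{vw} x_{v′w′}`,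
where `n₁ = min(|Vj|,|Vk|)`, `n₂ = n₁(n₁−1)/2`, and `P` is a set of ordered pairs of
correspondences containing each relevant unordered pair exactly once. -/
noncomputable def pqapObjective {Vj Vk : Type*} [Fintype Vj] [Fintype Vk]
    (lam : ℝ) (c : Vj × Vk → ℝ) (cp : (Vj × Vk) × (Vj × Vk) → ℝ)
    (P : Finset ((Vj × Vk) × (Vj × Vk))) (x : Vj × Vk → ℕ) : ℝ :=
  ((1 - lam) / (min (Fintype.card Vj) (Fintype.card Vk) : ℝ)) *
      ∑ p : Vj × Vk, c p * (x p : ℝ)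
    + (lam / ((min (Fintype.card Vj) (Fintype.card Vk) : ℝ) *
        ((min (Fintype.card Vj) (Fintype.card Vk) : ℝ) - 1) / 2)) *
      ∑ q ∈ P, cp q * (x q.1 : ℝ) * (x q.2 : ℝ)
theorem stmt10 {Vj Vk : Type*} [Fintype Vj] [Fintype Vk]
    (hn : 2 ≤ min (Fintype.card Vj) (Fintype.card Vk))
    (lam θ : ℝ) (hlam : lam ∈ Set.Ioo (0 : ℝ) 1) (hθ : θ ∈ Set.Ioo (0 : ℝ) 1)
    (δ δ' δ'' : ℝ) (hδ : 0 < δ) (hδ' : 0 < δ') (hδ'' : 0 < δ'')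
    (d d' : Vj × Vk → ℝ) (hd : ∀ p, 0 ≤ d p) (hd' : ∀ p, 0 ≤ d' p)
    (d'' : (Vj × Vk) × (Vj × Vk) → ℝ) (hd'' : ∀ q, 0 ≤ d'' q)
    (P : Finset ((Vj × Vk) × (Vj × Vk)))
    (hP1 : ∀ q ∈ P, q.1.1 ≠ q.2.1 ∧ q.1.2 ≠ q.2.2)
    (hP2 : ∀ p q : Vj × Vk, p.1 ≠ q.1 → p.2 ≠ q.2 → ((p, q) ∈ P ↔ (q, p) ∉ P))
    (mstar : ℝ)
    (hmin : IsLeast {y : ℝ | ∃ x, FeasibleAssignment x ∧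
        pqapObjective lam
          (fun p => θ * (d p - δ) + (1 - θ) * (d' p - δ'))
          (fun q => d'' q - δ'') P x = y} mstar) :
    0 ≤ -mstar / ((1 - lam) * (θ * δ + (1 - θ) * δ') + lam * δ'')
    ∧ -mstar / ((1 - lam) * (θ * δ + (1 - θ) * δ') + lam * δ'') ≤ 1 := by
  classical
  obtain ⟨hlam0, hlam1⟩ := hlam
  obtain ⟨hθ0, hθ1⟩ := hθ
  set n₁ : ℕ := min (Fintype.card Vj) (Fintype.card Vk) with hn₁def
  have hn2 : (2 : ℝ) ≤ (n₁ : ℝ) := by exact_mod_cast hn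
  have hn₁pos : (0 : ℝ) < (n₁ : ℝ) := by linarith
  set N₂ : ℝ := (n₁ : ℝ) * ((n₁ : ℝ) - 1) / 2 with hN₂def
  have hN₂pos : 0 < N₂ := by rw [hN₂def]; nlinarith
  set A : ℝ := θ * δ + (1 - θ) * δ' with hAdef
  have hApos : 0 < A := by rw [hAdef]; nlinarith
  set D : ℝ := (1 - lam) * A + lam * δ'' with hDdef
  have hDpos : 0 < D := by rw [hDdef]; nlinarith
  -- mstar ≤ 0 via the zero assignment
  have h0 : mstar ≤ 0 := by
    apply hmin.2
    refine ⟨fun _ => 0, ⟨fun p => Or.inl rfl, fun v => by simp, fun w => by simp⟩, ?_⟩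
    simp [pqapObjective]
  -- lower bound on mstar
  have hlb : -D ≤ mstar := by
    obtain ⟨x, hx, hval⟩ := hmin.1
    rw [← hval]
    obtain ⟨hx01, hrow, hcol⟩ := hx
    have hxnn : ∀ p, (0 : ℝ) ≤ (x p : ℝ) := fun p => Nat.cast_nonneg _
    -- bound on total sum of x
    have hsumN : ∑ p : Vj × Vk, x p ≤ n₁ := by
      have h1 : ∑ p : Vj × Vk, x p ≤ Fintype.card Vj := by
        rw [Fintype.sum_prod_type]
        calc ∑ v : Vj, ∑ w : Vk, x (v, w) ≤ ∑ _v : Vj, 1 :=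
              Finset.sum_le_sum fun v _ => hrow v
          _ = Fintype.card Vj := by simp
      have h2 : ∑ p : Vj × Vk, x p ≤ Fintype.card Vk := by
        rw [Fintype.sum_prod_type_right]
        calc ∑ w : Vk, ∑ v : Vj, x (v, w) ≤ ∑ _w : Vk, 1 :=
              Finset.sum_le_sum fun w _ => hcol w
          _ = Fintype.card Vk := by simp
      exact le_min h1 h2
    have hsumR : ∑ p : Vj × Vk, (x p : ℝ) ≤ (n₁ : ℝ) := by
      rw [← Nat.cast_sum]
      exact_mod_cast hsumN
    -- the support
    set S : Finset (Vj × Vk) := Finset.univ.filter (fun p => x p = 1) with hSdef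
    have hScard : S.card = ∑ p : Vj × Vk, x p := by
      rw [hSdef, Finset.card_filter]
      refine Finset.sum_congr rfl fun p _ => ?_
      rcases hx01 p with h | h <;> simp [h]
    have hScard_le : S.card ≤ n₁ := hScard ▸ hsumN
    -- pairs
    set T : Finset ((Vj × Vk) × (Vj × Vk)) :=
      P.filter (fun q => x q.1 = 1 ∧ x q.2 = 1) with hTdef
    have hTcard : T.card ≤ n₁.choose 2 := by
      have hmaps : ∀ q ∈ T, ({q.1, q.2} : Finset (Vj × Vk)) ∈ S.powersetCard 2 := by
        intro q hq
        rw [hTdef, Finset.mem_filter] at hq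
        obtain ⟨hqP, hq1, hq2⟩ := hq
        have hne : q.1 ≠ q.2 := fun h => (hP1 q hqP).1 (by rw [h])
        rw [Finset.mem_powersetCard]
        constructor
        · intro p hp
          rw [Finset.mem_insert, Finset.mem_singleton] at hp
          rcases hp with h | h <;> simp [hSdef, h, hq1, hq2]
        · rw [Finset.card_insert_of_notMem (by simpa using hne), Finset.card_singleton]
      have hinj : ∀ q ∈ T, ∀ q' ∈ T,
          ({q.1, q.2} : Finset (Vj × Vk)) = ({q'.1, q'.2} : Finset (Vj × Vk)) → q = q' := by
        intro q hq q' hq' heq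
        rw [hTdef, Finset.mem_filter] at hq hq'
        have hqP := hq.1
        have hq'P := hq'.1
        have h1 : q'.1 ∈ ({q.1, q.2} : Finset (Vj × Vk)) := by
          rw [heq]; simp
        have h2 : q'.2 ∈ ({q.1, q.2} : Finset (Vj × Vk)) := by
          rw [heq]; simp
        rw [Finset.mem_insert, Finset.mem_singleton] at h1 h2
        have hne' : q'.1 ≠ q'.2 := fun h => (hP1 q' hq'P).1 (by rw [h])
        rcases h1 with h1 | h1
        · rcases h2 with h2 | h2
          · exact absurd (h1.trans h2.symm) hne'
          · exact (Prod.ext_iff.mpr ⟨h1, h2⟩).symm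
        · rcases h2 with h2 | h2
          · -- q'.1 = q.2, q'.2 = q.1 : contradiction via hP2
            exfalso
            have hq'eq : q' = (q.2, q.1) := Prod.ext_iff.mpr ⟨h1, h2⟩
            have hmem : (q.2, q.1) ∈ P := hq'eq ▸ hq'P
            have hmem' : (q.1, q.2) ∈ P := hqP
            exact (hP2 q.1 q.2 (hP1 q hqP).1 (hP1 q hqP).2).mp hmem' hmem
          · exact absurd (h1.trans h2.symm) hne'
      calc T.card ≤ (S.powersetCard 2).card :=
            Finset.card_le_card_of_injOn _ hmaps fun q hq q' hq' h => hinj q hq q' hq' h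
        _ = S.card.choose 2 := by rw [Finset.card_powersetCard]
        _ ≤ n₁.choose 2 := Nat.choose_le_choose 2 hScard_le
    have hQsum : ∑ q ∈ P, (x q.1 : ℝ) * (x q.2 : ℝ) ≤ N₂ := by
      have h1 : ∑ q ∈ P, (x q.1 : ℝ) * (x q.2 : ℝ)
          = ∑ q ∈ P, (if x q.1 = 1 ∧ x q.2 = 1 then (1 : ℝ) else 0) := by
        refine Finset.sum_congr rfl fun q _ => ?_
        rcases hx01 q.1 with h | h <;> rcases hx01 q.2 with h' | h' <;>
          simp [h, h']
      have h2 : ∑ q ∈ P, (if x q.1 = 1 ∧ x q.2 = 1 then (1 : ℝ) else 0) = (T.card : ℝ) := by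
        rw [hTdef, Finset.card_filter]
        push_cast
        rfl
      rw [h1, h2]
      calc (T.card : ℝ) ≤ (n₁.choose 2 : ℝ) := by exact_mod_cast hTcard
        _ = N₂ := by rw [Nat.cast_choose_two, hN₂def]
    -- bound the linear sum
    have hL : -(A * (n₁ : ℝ)) ≤
        ∑ p : Vj × Vk, (θ * (d p - δ) + (1 - θ) * (d' p - δ')) * (x p : ℝ) := by
      have step : -A * ∑ p : Vj × Vk, (x p : ℝ) ≤
          ∑ p : Vj × Vk, (θ * (d p - δ) + (1 - θ) * (d' p - δ')) * (x p : ℝ) := by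
        rw [Finset.mul_sum]
        refine Finset.sum_le_sum fun p _ => ?_
        rw [hAdef]
        nlinarith [mul_nonneg (mul_nonneg hθ0.le (hd p)) (hxnn p),
          mul_nonneg (mul_nonneg (by linarith : (0:ℝ) ≤ 1 - θ) (hd' p)) (hxnn p)]
      have step2 : -A * (n₁ : ℝ) ≤ -A * ∑ p : Vj × Vk, (x p : ℝ) := by
        have hAneg : -A ≤ 0 := by linarith
        exact mul_le_mul_of_nonpos_left hsumR hAneg
      linarith
    -- bound the quadratic sum
    have hQ : -(δ'' * N₂) ≤ ∑ q ∈ P, (d'' q - δ'') * (x q.1 : ℝ) * (x q.2 : ℝ) := by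
      have step : -δ'' * ∑ q ∈ P, (x q.1 : ℝ) * (x q.2 : ℝ) ≤
          ∑ q ∈ P, (d'' q - δ'') * (x q.1 : ℝ) * (x q.2 : ℝ) := by
        rw [Finset.mul_sum]
        refine Finset.sum_le_sum fun q _ => ?_
        nlinarith [mul_nonneg (mul_nonneg (hd'' q) (hxnn q.1)) (hxnn q.2)]
      have step2 : -δ'' * N₂ ≤ -δ'' * ∑ q ∈ P, (x q.1 : ℝ) * (x q.2 : ℝ) := by
        have hneg : -δ'' ≤ 0 := by linarith
        exact mul_le_mul_of_nonpos_left hQsum hneg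
      linarith
    -- conclude
    have hc1 : (0 : ℝ) ≤ (1 - lam) / (n₁ : ℝ) := div_nonneg (by linarith) hn₁pos.le
    have hc2 : (0 : ℝ) ≤ lam / N₂ := div_nonneg hlam0.le hN₂pos.le
    have hn₁ne : (n₁ : ℝ) ≠ 0 := ne_of_gt hn₁pos
    have key : -D = ((1 - lam) / (n₁ : ℝ)) * (-(A * (n₁ : ℝ)))
        + (lam / N₂) * (-(δ'' * N₂)) := by
      rw [hDdef]
      field_simp
      ring
    have hcast : (min (Fintype.card Vj : ℝ) (Fintype.card Vk : ℝ)) = (n₁ : ℝ) := by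
      rw [hn₁def, Nat.cast_min]
    simp only [pqapObjective]
    rw [hcast, ← hN₂def, key]
    exact add_le_add (mul_le_mul_of_nonneg_left hL hc1)
      (mul_le_mul_of_nonneg_left hQ hc2)
  constructor
  · apply div_nonneg _ hDpos.le
    linarith
  · rw [div_le_one hDpos]
    linarith
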